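/- Let F ∈ ℂ[x,y] be a binary quintic (homogeneous of degree 5) over ℂ. Then F factors as L^4·M for some linear forms L, M (homogeneous of degree 1) if and only if the transvectant (F,F)^4 is the zero polynomial. -/

import Mathlib

open MvPolynomial

/-- Partial derivative with respect to `x` (the variable `0`). -/
noncomputable def pdx : MvPolynomial (Fin 2) ℂ → MvPolynomial (Fin 2) ℂ :=
  fun p => MvPolynomial.pderiv (0 : Fin 2) p

/-- Partial derivative with respect to `y` (the variable `1`). -/
noncomputable def pdy : MvPolynomial (Fin 2) ℂ → MvPolynomial (Fin 2) ℂ :=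
  fun p => MvPolynomial.pderiv (1 : Fin 2) p

/-- The `r`-th transvectant of binary forms `Φ₁`, `Φ₂` of degrees `q₁`, `q₂`, with the
classical symbolic-method normalization
`((q₁−r)!·(q₂−r)!)/(q₁!·q₂!) · Σ_{k=0}^{r} (−1)^k·binom(r,k)·
  (∂^rΦ₁/∂x^{r−k}∂y^k)·(∂^rΦ₂/∂x^k∂y^{r−k})`. -/
noncomputable def transvectant (q₁ q₂ r : ℕ) (Φ₁ Φ₂ : MvPolynomial (Fin 2) ℂ) :
    MvPolynomial (Fin 2) ℂ :=
  MvPolynomial.C ((((q₁ - r).factorial : ℂ) * ((q₂ - r).factorial : ℂ)) /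
      ((q₁.factorial : ℂ) * (q₂.factorial : ℂ))) *
    ∑ k ∈ Finset.range (r + 1),
      MvPolynomial.C ((-1 : ℂ) ^ k * (r.choose k : ℂ)) *
        (pdx^[r - k] (pdy^[k] Φ₁)) * (pdx^[k] (pdy^[r - k] Φ₂))

/-! Write a quintic as `∑ aᵢ xⁱ y⁵⁻ⁱ`. A direct computation gives
`(F,F)⁴ = (1/50)(i₀ y² + i₁ xy + i₂ x²)` with `i₀, i₁, i₂` the quadratic forms in the `aᵢ` of
`quinticCovariantCoeffs`, and these vanish identically on the coefficients of `(px + qy)⁴(rx + sy)`.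

Conversely, assume `i₀ = i₁ = i₂ = 0`. If `a₅ ≠ 0`, the equations `i₂ = 0` and `i₁ = 0` are
linear in `a₁` and `a₀`, so `F` is determined by `a₂, …, a₅` once the fourfold factor `x + αy`
is found from `a₂, a₃`. Eliminating `a₀, a₁` gives `W² + 2U³ = 0` with `U = 5a₃a₅ - 2a₄²` and
`W = 25a₂a₅² - 15a₃a₄a₅ + 4a₄³`; then `α = a₄/(5a₅)` if `U = 0` (a fifth power) and
`α = (5a₂a₅ - a₃a₄)/(2U)` otherwise. If `a₅ = 0` then `y ∣ F`, and the same elimination runs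
from `a₄` downwards. -/

section BinaryForms

variable {R : Type*} [CommSemiring R]

noncomputable def binaryForm (n : ℕ) (a : Fin (n + 1) → R) : MvPolynomial (Fin 2) R :=
  ∑ i : Fin (n + 1), C (a i) * X 0 ^ (i : ℕ) * X 1 ^ (n - i)

noncomputable def linearForm (p q : R) : MvPolynomial (Fin 2) R :=
  C p * X 0 + C q * X 1

theorem isHomogeneous_linearForm (p q : R) : (linearForm p q).IsHomogeneous 1 :=
  (isHomogeneous_C_mul_X p 0).add (isHomogeneous_C_mul_X q 1)

theorem C_mul_X_zero_pow_mul_X_one_pow (r : R) (i j : ℕ) :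
    (C r * X 0 ^ i * X 1 ^ j : MvPolynomial (Fin 2) R) =
      monomial (Finsupp.single 0 i + Finsupp.single 1 j) r := by
  rw [monomial_add_single, C_mul_X_pow_eq_monomial]

theorem eq_single_zero_add_single_one (m : Fin 2 →₀ ℕ) :
    m = Finsupp.single 0 (m 0) + Finsupp.single 1 (m 1) := by
  ext j
  fin_cases j <;> simp

theorem coeff_binaryForm (n : ℕ) (a : Fin (n + 1) → R) (i : Fin (n + 1)) :
    coeff (Finsupp.single 0 (i : ℕ) + Finsupp.single 1 (n - i)) (binaryForm n a) = a i := by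
  classical
  simp only [binaryForm, C_mul_X_zero_pow_mul_X_one_pow, coeff_sum, coeff_monomial]
  refine (Finset.sum_eq_single i (fun j _ hji => if_neg fun h => hji (Fin.ext ?_))
    (by simp)).trans (if_pos rfl)
  simpa using congrArg (· 0) h

theorem binaryForm_injective (n : ℕ) : Function.Injective (binaryForm (R := R) n) := by
  intro a b h
  funext i
  rw [← coeff_binaryForm n a i, h, coeff_binaryForm]

theorem binaryForm_eq_zero_iff {n : ℕ} {a : Fin (n + 1) → R} : binaryForm n a = 0 ↔ a = 0 := by
  have : binaryForm n (0 : Fin (n + 1) → R) = 0 := by simp [binaryForm]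
  rw [← this, (binaryForm_injective n).eq_iff]

theorem MvPolynomial.IsHomogeneous.exists_eq_binaryForm {F : MvPolynomial (Fin 2) R} {n : ℕ}
    (hF : F.IsHomogeneous n) : ∃ a, F = binaryForm n a := by
  classical
  refine ⟨fun i => coeff (Finsupp.single 0 (i : ℕ) + Finsupp.single 1 (n - i)) F, ?_⟩
  ext m
  simp only [binaryForm, C_mul_X_zero_pow_mul_X_one_pow, coeff_sum, coeff_monomial]
  by_cases hm : m 0 + m 1 = n
  · have hm1 : m 1 = n - m 0 := by omega
    rw [Finset.sum_eq_single ⟨m 0, by omega⟩]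
    · simp [← hm1, ← eq_single_zero_add_single_one]
    · intro j _ hj
      refine if_neg fun h => hj (Fin.ext ?_)
      simpa using congrArg (· 0) h
    · simp
  · rw [hF.coeff_eq_zero (by rwa [Finsupp.degree_eq_sum, Fin.sum_univ_two]),
      Finset.sum_eq_zero]
    intro j _
    refine if_neg fun h => hm ?_
    have h0 := congrArg (· 0) h
    have h1 := congrArg (· 1) h
    simp at h0 h1
    omega

theorem MvPolynomial.IsHomogeneous.exists_eq_linearForm {L : MvPolynomial (Fin 2) R}
    (hL : L.IsHomogeneous 1) : ∃ p q, L = linearForm p q := by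
  obtain ⟨a, rfl⟩ := hL.exists_eq_binaryForm
  exact ⟨a 1, a 0, by simp [binaryForm, linearForm, Fin.sum_univ_two, add_comm]⟩

theorem binaryForm_five (a : Fin 6 → R) :
    binaryForm 5 a = C (a 0) * X 1 ^ 5 + C (a 1) * X 0 * X 1 ^ 4 + C (a 2) * X 0 ^ 2 * X 1 ^ 3 +
      C (a 3) * X 0 ^ 3 * X 1 ^ 2 + C (a 4) * X 0 ^ 4 * X 1 + C (a 5) * X 0 ^ 5 := by
  simp [binaryForm, Fin.sum_univ_succ, add_assoc]

theorem binaryForm_two (a : Fin 3 → R) :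
    binaryForm 2 a = C (a 0) * X 1 ^ 2 + C (a 1) * X 0 * X 1 + C (a 2) * X 0 ^ 2 := by
  simp [binaryForm, Fin.sum_univ_succ, add_assoc]

theorem linearForm_pow_four_mul_linearForm (p q r s : R) :
    linearForm p q ^ 4 * linearForm r s =
      binaryForm 5 ![q ^ 4 * s, q ^ 4 * r + 4 * p * q ^ 3 * s,
        4 * p * q ^ 3 * r + 6 * p ^ 2 * q ^ 2 * s, 6 * p ^ 2 * q ^ 2 * r + 4 * p ^ 3 * q * s,
        4 * p ^ 3 * q * r + p ^ 4 * s, p ^ 4 * r] := by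
  simp only [binaryForm_five, linearForm, Matrix.cons_val, map_add, map_mul, map_pow, map_ofNat]
  ring

end BinaryForms

theorem pdx_add (f g : MvPolynomial (Fin 2) ℂ) : pdx (f + g) = pdx f + pdx g := map_add _ _ _

theorem pdy_add (f g : MvPolynomial (Fin 2) ℂ) : pdy (f + g) = pdy f + pdy g := map_add _ _ _

theorem pdx_C_mul_X_pow_mul_X_pow (r : ℂ) (i j : ℕ) :
    pdx (C r * X 0 ^ i * X 1 ^ j) = C (r * i) * X 0 ^ (i - 1) * X 1 ^ j := by
  simp [pdx, pderiv_X_of_ne (show (1 : Fin 2) ≠ 0 by decide)]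
  ring

theorem pdy_C_mul_X_pow_mul_X_pow (r : ℂ) (i j : ℕ) :
    pdy (C r * X 0 ^ i * X 1 ^ j) = C (r * j) * X 0 ^ i * X 1 ^ (j - 1) := by
  simp [pdy, pderiv_X_of_ne (show (0 : Fin 2) ≠ 1 by decide)]
  ring

noncomputable def quinticCovariantCoeffs (a : Fin 6 → ℂ) : Fin 3 → ℂ :=
  ![3 * a 2 ^ 2 - 8 * a 1 * a 3 + 20 * a 0 * a 4,
    2 * a 2 * a 3 - 12 * a 1 * a 4 + 100 * a 0 * a 5,
    3 * a 3 ^ 2 - 8 * a 2 * a 4 + 20 * a 1 * a 5]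

theorem transvectant_binaryForm_five (a : Fin 6 → ℂ) :
    transvectant 5 5 4 (binaryForm 5 a) (binaryForm 5 a) =
      C (1 / 50) * binaryForm 2 (quinticCovariantCoeffs a) := by
  -- `ring` cannot invert numerals in `MvPolynomial`, so `1/50` is split to expose the
  -- normalising constant `1!·1!/(5!·5!) = 1/14400` of the transvectant.
  have h50 : (C (1 / 50) : MvPolynomial (Fin 2) ℂ) = C (1 / 14400) * 288 := by
    rw [← map_ofNat C, ← map_mul]
    norm_num
  rw [h50, mul_assoc, transvectant]
  congr 1
  · norm_num [Nat.factorial]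
  rw [binaryForm, binaryForm_two, Fin.sum_univ_six]
  simp only [Finset.sum_range_succ, Finset.sum_range_zero, tsub_zero, tsub_self,
    Function.iterate_succ, Function.iterate_zero, Function.comp_apply, id_eq, pdx_add, pdy_add,
    pdx_C_mul_X_pow_mul_X_pow, pdy_C_mul_X_pow_mul_X_pow]
  simp only [quinticCovariantCoeffs, Matrix.cons_val]
  norm_num [Nat.choose, map_ofNat]
  ring

theorem transvectant_linearForm_pow_four_mul_linearForm (p q r s : ℂ) :
    transvectant 5 5 4 (linearForm p q ^ 4 * linearForm r s)
      (linearForm p q ^ 4 * linearForm r s) = 0 := by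
  rw [linearForm_pow_four_mul_linearForm, transvectant_binaryForm_five,
    binaryForm_eq_zero_iff.mpr, mul_zero]
  ext i
  fin_cases i <;> simp [quinticCovariantCoeffs] <;> ring

theorem quinticCovariantCoeffs_eq_zero_iff {a : Fin 6 → ℂ} :
    quinticCovariantCoeffs a = 0 ↔
      3 * a 2 ^ 2 - 8 * a 1 * a 3 + 20 * a 0 * a 4 = 0 ∧
      2 * a 2 * a 3 - 12 * a 1 * a 4 + 100 * a 0 * a 5 = 0 ∧
      3 * a 3 ^ 2 - 8 * a 2 * a 4 + 20 * a 1 * a 5 = 0 := by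
  simp [quinticCovariantCoeffs, funext_iff, Fin.forall_fin_succ]

theorem exists_eq_linearForm_pow_four_mul_of_coeff_five_eq_zero {a : Fin 6 → ℂ} (h5 : a 5 = 0)
    (hc0 : 3 * a 2 ^ 2 - 8 * a 1 * a 3 + 20 * a 0 * a 4 = 0)
    (hc1 : 2 * a 2 * a 3 - 12 * a 1 * a 4 + 100 * a 0 * a 5 = 0)
    (hc2 : 3 * a 3 ^ 2 - 8 * a 2 * a 4 + 20 * a 1 * a 5 = 0) :
    ∃ p q r s, binaryForm 5 a = linearForm p q ^ 4 * linearForm r s := by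
  by_cases h4 : a 4 = 0
  · have h3 : a 3 = 0 := by simpa [h4, h5] using hc2
    have h2 : a 2 = 0 := by simpa [h3, h4] using hc0
    refine ⟨0, 1, a 1, a 0, ?_⟩
    rw [linearForm_pow_four_mul_linearForm]
    congr 1
    ext i
    fin_cases i <;> simp [h2, h3, h4, h5]
  · obtain ⟨α, h3⟩ : ∃ α, a 3 = 4 * a 4 * α := ⟨a 3 / (4 * a 4), by field_simp⟩
    have h2 : a 2 = 6 * a 4 * α ^ 2 := by
      apply mul_left_cancel₀ (show 8 * a 4 ≠ 0 by simpa using h4)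
      linear_combination -hc2 + 3 * (a 3 + 4 * a 4 * α) * h3 + 20 * a 1 * h5
    have h1 : a 1 = 4 * a 4 * α ^ 3 := by
      apply mul_left_cancel₀ (show 12 * a 4 ≠ 0 by simpa using h4)
      linear_combination -hc1 + 2 * a 3 * h2 + 12 * a 4 * α ^ 2 * h3 + 100 * a 0 * h5
    have h0 : a 0 = a 4 * α ^ 4 := by
      apply mul_left_cancel₀ (show 20 * a 4 ≠ 0 by simpa using h4)
      linear_combination hc0 - 3 * (a 2 + 6 * a 4 * α ^ 2) * h2 + 8 * a 3 * h1
        + 32 * a 4 * α ^ 3 * h3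
    refine ⟨1, α, 0, a 4, ?_⟩
    rw [linearForm_pow_four_mul_linearForm]
    congr 1
    ext i
    fin_cases i <;> simp [h0, h1, h2, h3, h5] <;> ring

theorem binaryForm_five_eq_of_coeff_five_ne_zero {a : Fin 6 → ℂ} {α : ℂ} (h5 : a 5 ≠ 0)
    (h3 : a 3 = 4 * α * a 4 - 10 * a 5 * α ^ 2) (h2 : a 2 = 6 * α ^ 2 * a 4 - 20 * a 5 * α ^ 3)
    (hc1 : 2 * a 2 * a 3 - 12 * a 1 * a 4 + 100 * a 0 * a 5 = 0)
    (hc2 : 3 * a 3 ^ 2 - 8 * a 2 * a 4 + 20 * a 1 * a 5 = 0) :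
    binaryForm 5 a = linearForm 1 α ^ 4 * linearForm (a 5) (a 4 - 4 * a 5 * α) := by
  have h1 : a 1 = 4 * α ^ 3 * a 4 - 15 * a 5 * α ^ 4 := by
    apply mul_left_cancel₀ (show 20 * a 5 ≠ 0 by simpa using h5)
    linear_combination hc2 + 8 * a 4 * h2 - 3 * (a 3 + 4 * α * a 4 - 10 * a 5 * α ^ 2) * h3
  have h0 : a 0 = α ^ 4 * a 4 - 4 * a 5 * α ^ 5 := by
    apply mul_left_cancel₀ (show 100 * a 5 ≠ 0 by simpa using h5)
    linear_combination hc1 + 12 * a 4 * h1 - 2 * a 3 * h2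
      - 2 * (6 * α ^ 2 * a 4 - 20 * a 5 * α ^ 3) * h3
  rw [linearForm_pow_four_mul_linearForm]
  congr 1
  ext i
  fin_cases i <;> simp [h0, h1, h2, h3] <;> ring

theorem exists_eq_linearForm_pow_four_mul_of_coeff_five_ne_zero {a : Fin 6 → ℂ} (h5 : a 5 ≠ 0)
    (hc0 : 3 * a 2 ^ 2 - 8 * a 1 * a 3 + 20 * a 0 * a 4 = 0)
    (hc1 : 2 * a 2 * a 3 - 12 * a 1 * a 4 + 100 * a 0 * a 5 = 0)
    (hc2 : 3 * a 3 ^ 2 - 8 * a 2 * a 4 + 20 * a 1 * a 5 = 0) :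
    ∃ p q r s, binaryForm 5 a = linearForm p q ^ 4 * linearForm r s := by
  suffices ∃ α, a 3 = 4 * α * a 4 - 10 * a 5 * α ^ 2 ∧ a 2 = 6 * α ^ 2 * a 4 - 20 * a 5 * α ^ 3 by
    obtain ⟨α, h3, h2⟩ := this
    exact ⟨1, α, a 5, a 4 - 4 * a 5 * α, binaryForm_five_eq_of_coeff_five_ne_zero h5 h3 h2 hc1 hc2⟩
  have hUW : (25 * a 2 * a 5 ^ 2 - 15 * a 3 * a 4 * a 5 + 4 * a 4 ^ 3) ^ 2
      + 2 * (5 * a 3 * a 5 - 2 * a 4 ^ 2) ^ 3 = 0 := by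
    linear_combination (625 * a 5 ^ 4 / 3) * hc0 - (125 * a 5 ^ 3 * a 4 / 3) * hc1
      - (25 * a 5 ^ 2 * (12 * a 4 ^ 2 - 40 * a 3 * a 5) / 12) * hc2
  by_cases hU : 5 * a 3 * a 5 - 2 * a 4 ^ 2 = 0
  · have hW : 25 * a 2 * a 5 ^ 2 - 15 * a 3 * a 4 * a 5 + 4 * a 4 ^ 3 = 0 := by
      simpa [hU] using hUW
    obtain ⟨α, h4⟩ : ∃ α, a 4 = 5 * a 5 * α := ⟨a 4 / (5 * a 5), by field_simp⟩
    have h3 : a 3 = 10 * a 5 * α ^ 2 := by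
      apply mul_left_cancel₀ (show 5 * a 5 ≠ 0 by simpa using h5)
      linear_combination hU + 2 * (a 4 + 5 * a 5 * α) * h4
    have h2 : a 2 = 10 * a 5 * α ^ 3 := by
      apply mul_left_cancel₀ (show 25 * a 5 ^ 2 ≠ 0 by simpa using h5)
      linear_combination hW + 15 * a 4 * a 5 * h3
        + (-4 * a 4 ^ 2 - 20 * a 5 * α * a 4 + 50 * a 5 ^ 2 * α ^ 2) * h4
    exact ⟨α, by rw [h3, h4]; ring, by rw [h2, h4]; ring⟩
  · obtain ⟨α, hα⟩ : ∃ α, 2 * (5 * a 3 * a 5 - 2 * a 4 ^ 2) * α = 5 * a 2 * a 5 - a 3 * a 4 :=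
      ⟨(5 * a 2 * a 5 - a 3 * a 4) / (2 * (5 * a 3 * a 5 - 2 * a 4 ^ 2)), by field_simp⟩
    have h3_cleared : 5 * a 5 * (5 * a 2 * a 5 - a 3 * a 4) ^ 2
        - 4 * (5 * a 3 * a 5 - 2 * a 4 ^ 2) * (5 * a 2 * a 5 - a 3 * a 4) * a 4
        + 2 * (5 * a 3 * a 5 - 2 * a 4 ^ 2) ^ 2 * a 3 = 0 := by
      apply mul_left_cancel₀ (show 5 * a 5 ≠ 0 by simpa using h5)
      linear_combination hUW
    have h3 : a 3 = 4 * α * a 4 - 10 * a 5 * α ^ 2 := by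
      apply mul_left_cancel₀ (show 2 * (5 * a 3 * a 5 - 2 * a 4 ^ 2) ^ 2 ≠ 0 by simpa using hU)
      linear_combination h3_cleared + (-4 * (5 * a 3 * a 5 - 2 * a 4 ^ 2) * a 4
        + 5 * a 5 * (2 * (5 * a 3 * a 5 - 2 * a 4 ^ 2) * α + (5 * a 2 * a 5 - a 3 * a 4))) * hα
    have h2 : a 2 = 6 * α ^ 2 * a 4 - 20 * a 5 * α ^ 3 := by
      apply mul_left_cancel₀ (show 5 * a 5 ≠ 0 by simpa using h5)
      linear_combination -hα + (10 * α * a 5 + a 4) * h3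
    exact ⟨α, h3, h2⟩

theorem exists_eq_linearForm_pow_four_mul_of_quinticCovariantCoeffs_eq_zero {a : Fin 6 → ℂ}
    (h : quinticCovariantCoeffs a = 0) :
    ∃ p q r s, binaryForm 5 a = linearForm p q ^ 4 * linearForm r s := by
  obtain ⟨hc0, hc1, hc2⟩ := quinticCovariantCoeffs_eq_zero_iff.mp h
  by_cases h5 : a 5 = 0
  · exact exists_eq_linearForm_pow_four_mul_of_coeff_five_eq_zero h5 hc0 hc1 hc2
  · exact exists_eq_linearForm_pow_four_mul_of_coeff_five_ne_zero h5 hc0 hc1 hc2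

/-- A binary quintic `F` is of the form `L⁴M` iff the covariant `i = (F,F)⁴` vanishes. -/
theorem quintic_quadrupleRoot_iff (F : MvPolynomial (Fin 2) ℂ)
    (hF : F.IsHomogeneous 5) :
    (∃ L M : MvPolynomial (Fin 2) ℂ, L.IsHomogeneous 1 ∧ M.IsHomogeneous 1 ∧
        F = L ^ 4 * M) ↔ transvectant 5 5 4 F F = 0 := by
  constructor
  · rintro ⟨L, M, hL, hM, rfl⟩
    obtain ⟨p, q, rfl⟩ := hL.exists_eq_linearForm
    obtain ⟨r, s, rfl⟩ := hM.exists_eq_linearForm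
    exact transvectant_linearForm_pow_four_mul_linearForm p q r s
  · intro h
    obtain ⟨a, rfl⟩ := hF.exists_eq_binaryForm
    rw [transvectant_binaryForm_five, mul_eq_zero, C_eq_zero, binaryForm_eq_zero_iff] at h
    obtain ⟨p, q, r, s, hpqrs⟩ :=
      exists_eq_linearForm_pow_four_mul_of_quinticCovariantCoeffs_eq_zero
        (h.resolve_left (by norm_num))
    exact ⟨_, _, isHomogeneous_linearForm p q, isHomogeneous_linearForm r s, hpqrs⟩
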